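/- The composition operator ⊙ on constraint automaton steps is associative: for constraint automaton steps cas1, cas2, cas3 over port sets N1, N2, N3 respectively, (cas1 ⊙ cas2) ⊙ cas3 = cas1 ⊙ (cas2 ⊙ cas3), where a composition involving ⊥ is ⊥, and the composite of cas1 ⊙ cas2 is taken over port set N1 ∪ N2. -/

import Mathlib

/-- Well-formedness of a constraint automaton step: the domain of the data
assignment is exactly the flow set. -/
def WFCAS {Port D : Type} (c : Set Port × (Port → Option D)) : Prop :=
  ∀ x, (c.2 x).isSome ↔ x ∈ c.1

/-- Composition of constraint automaton steps over port sets `N1` and `N2`. -/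
noncomputable def compCAS {Port D : Type} (N1 N2 : Set Port)
    (c1 c2 : Set Port × (Port → Option D)) :
    Option (Set Port × (Port → Option D)) :=
  open Classical in
  if (c1.1 ∩ N2 = c2.1 ∩ N1) ∧ (∀ x ∈ c1.1 ∩ c2.1, c1.2 x = c2.2 x) then
    some (c1.1 ∪ c2.1, fun x => (c1.2 x).orElse (fun _ => c2.2 x))
  else none

/-!
Both bracketings are defined exactly when the three steps are pairwise compatible, and then both
are the merge of all three steps, because `Option.orElse` is associative. The reduction to pairwise
compatibility rests on two facts: flow sets lie inside their port sets, which settles the port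
condition, and the merged assignment of a compatible pair agrees with each operand on that
operand's flow set (this is where well-formedness of the left operand enters), which settles the
data condition.
-/

open Set

namespace Set

variable {α : Type*} {X1 X2 X3 N1 N2 N3 : Set α}

theorem union_inter_eq_inter_union_iff (hsub1 : X1 ⊆ N1) (hsub2 : X2 ⊆ N2)
    (h12 : X1 ∩ N2 = X2 ∩ N1) :
    (X1 ∪ X2) ∩ N3 = X3 ∩ (N1 ∪ N2) ↔ X1 ∩ N3 = X3 ∩ N1 ∧ X2 ∩ N3 = X3 ∩ N2 := by
  simp only [Set.ext_iff, mem_inter_iff, mem_union] at h12 ⊢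
  refine ⟨fun h => ⟨fun x => ?_, fun x => ?_⟩, fun ⟨h13, h23⟩ x => ?_⟩
  · have := @hsub1 x; have := h12 x; have := h x; tauto
  · have := @hsub2 x; have := h12 x; have := h x; tauto
  · have := h12 x; have := h13 x; have := h23 x; tauto

theorem inter_union_eq_union_inter_iff (hsub1 : X1 ⊆ N1) (hsub2 : X2 ⊆ N2) (hsub3 : X3 ⊆ N3)
    (h23 : X2 ∩ N3 = X3 ∩ N2) :
    X1 ∩ (N2 ∪ N3) = (X2 ∪ X3) ∩ N1 ↔ X1 ∩ N2 = X2 ∩ N1 ∧ X1 ∩ N3 = X3 ∩ N1 := by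
  simp only [Set.ext_iff, mem_inter_iff, mem_union] at h23 ⊢
  refine ⟨fun h => ⟨fun x => ?_, fun x => ?_⟩, fun ⟨h12, h13⟩ x => ?_⟩
  · have := @hsub2 x; have := h23 x; have := h x; tauto
  · have := @hsub1 x; have := @hsub3 x; have := h23 x; have := h x; tauto
  · have := h12 x; have := h13 x; tauto

theorem EqOn.eqOn_iff_left {β : Type*} {f₁ f₂ g : α → β} {s : Set α} (h : EqOn f₁ f₂ s) :
    EqOn f₁ g s ↔ EqOn f₂ g s :=
  ⟨h.symm.trans, h.trans⟩

theorem EqOn.eqOn_iff_right {β : Type*} {f₁ f₂ g : α → β} {s : Set α} (h : EqOn f₁ f₂ s) :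
    EqOn g f₁ s ↔ EqOn g f₂ s :=
  ⟨fun h' => h'.trans h, fun h' => h'.trans h.symm⟩

end Set

namespace CAS

variable {Port D : Type} {N1 N2 N3 : Set Port} {c1 c2 c3 : Set Port × (Port → Option D)}

def Compatible (N1 N2 : Set Port) (c1 c2 : Set Port × (Port → Option D)) : Prop :=
  c1.1 ∩ N2 = c2.1 ∩ N1 ∧ EqOn c1.2 c2.2 (c1.1 ∩ c2.1)

def merge (c1 c2 : Set Port × (Port → Option D)) : Set Port × (Port → Option D) :=
  (c1.1 ∪ c2.1, fun x => (c1.2 x).orElse fun _ => c2.2 x)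

@[simp]
theorem merge_fst (c1 c2 : Set Port × (Port → Option D)) : (merge c1 c2).1 = c1.1 ∪ c2.1 :=
  rfl

open Classical in
theorem compCAS_eq_ite (N1 N2 : Set Port) (c1 c2 : Set Port × (Port → Option D)) :
    compCAS N1 N2 c1 c2 = if Compatible N1 N2 c1 c2 then some (merge c1 c2) else none :=
  if_congr Iff.rfl rfl rfl

theorem compCAS_eq_some_merge (h : Compatible N1 N2 c1 c2) :
    compCAS N1 N2 c1 c2 = some (merge c1 c2) :=
  if_pos h

theorem compCAS_eq_none (h : ¬Compatible N1 N2 c1 c2) : compCAS N1 N2 c1 c2 = none :=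
  if_neg h

theorem merge_assoc (c1 c2 c3 : Set Port × (Port → Option D)) :
    merge (merge c1 c2) c3 = merge c1 (merge c2 c3) := by
  simp only [merge, union_assoc, Option.orElse_eq_or, Option.or_assoc]

theorem eqOn_merge_left (h1 : WFCAS c1) : EqOn (merge c1 c2).2 c1.2 c1.1 := by
  intro x hx
  obtain ⟨a, ha⟩ := Option.isSome_iff_exists.mp ((h1 x).mpr hx)
  simp [merge, ha]

theorem eqOn_merge_right (h1 : WFCAS c1) (h12 : EqOn c1.2 c2.2 (c1.1 ∩ c2.1)) :
    EqOn (merge c1 c2).2 c2.2 c2.1 := by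
  intro x hx
  by_cases hx1 : x ∈ c1.1
  · exact (eqOn_merge_left h1 hx1).trans (h12 ⟨hx1, hx⟩)
  · simp [merge, Option.not_isSome_iff_eq_none.mp (mt (h1 x).mp hx1)]

theorem compatible_merge_left_iff (h1 : WFCAS c1) (hsub1 : c1.1 ⊆ N1) (hsub2 : c2.1 ⊆ N2)
    (h12 : Compatible N1 N2 c1 c2) :
    Compatible (N1 ∪ N2) N3 (merge c1 c2) c3 ↔
      Compatible N1 N3 c1 c3 ∧ Compatible N2 N3 c2 c3 := by
  have hdata : EqOn (merge c1 c2).2 c3.2 ((c1.1 ∪ c2.1) ∩ c3.1) ↔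
      EqOn c1.2 c3.2 (c1.1 ∩ c3.1) ∧ EqOn c2.2 c3.2 (c2.1 ∩ c3.1) := by
    rw [union_inter_distrib_right, eqOn_union,
      ((eqOn_merge_left h1).mono inter_subset_left).eqOn_iff_left,
      ((eqOn_merge_right h1 h12.2).mono inter_subset_left).eqOn_iff_left]
  rw [Compatible, merge_fst, hdata, union_inter_eq_inter_union_iff hsub1 hsub2 h12.1]
  exact and_and_and_comm

theorem compatible_merge_right_iff (h2 : WFCAS c2) (hsub1 : c1.1 ⊆ N1) (hsub2 : c2.1 ⊆ N2)
    (hsub3 : c3.1 ⊆ N3) (h23 : Compatible N2 N3 c2 c3) :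
    Compatible N1 (N2 ∪ N3) c1 (merge c2 c3) ↔
      Compatible N1 N2 c1 c2 ∧ Compatible N1 N3 c1 c3 := by
  have hdata : EqOn c1.2 (merge c2 c3).2 (c1.1 ∩ (c2.1 ∪ c3.1)) ↔
      EqOn c1.2 c2.2 (c1.1 ∩ c2.1) ∧ EqOn c1.2 c3.2 (c1.1 ∩ c3.1) := by
    rw [inter_union_distrib_left, eqOn_union,
      ((eqOn_merge_left h2).mono inter_subset_right).eqOn_iff_right,
      ((eqOn_merge_right h2 h23.2).mono inter_subset_right).eqOn_iff_right]
  rw [Compatible, merge_fst, hdata, inter_union_eq_union_inter_iff hsub1 hsub2 hsub3 h23.1]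
  exact and_and_and_comm

open Classical in
theorem compCAS_bind_compCAS_left (h1 : WFCAS c1) (hsub1 : c1.1 ⊆ N1) (hsub2 : c2.1 ⊆ N2) :
    (compCAS N1 N2 c1 c2).bind (fun c12 => compCAS (N1 ∪ N2) N3 c12 c3) =
      if Compatible N1 N2 c1 c2 ∧ Compatible N1 N3 c1 c3 ∧ Compatible N2 N3 c2 c3 then
        some (merge (merge c1 c2) c3) else none := by
  by_cases h12 : Compatible N1 N2 c1 c2
  · rw [compCAS_eq_some_merge h12, Option.bind_some, compCAS_eq_ite]
    simp only [compatible_merge_left_iff h1 hsub1 hsub2 h12, h12, true_and]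
  · rw [compCAS_eq_none h12, Option.bind_none, if_neg (fun h => h12 h.1)]

open Classical in
theorem compCAS_bind_compCAS_right (h2 : WFCAS c2) (hsub1 : c1.1 ⊆ N1) (hsub2 : c2.1 ⊆ N2)
    (hsub3 : c3.1 ⊆ N3) :
    (compCAS N2 N3 c2 c3).bind (fun c23 => compCAS N1 (N2 ∪ N3) c1 c23) =
      if Compatible N1 N2 c1 c2 ∧ Compatible N1 N3 c1 c3 ∧ Compatible N2 N3 c2 c3 then
        some (merge c1 (merge c2 c3)) else none := by
  by_cases h23 : Compatible N2 N3 c2 c3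
  · rw [compCAS_eq_some_merge h23, Option.bind_some, compCAS_eq_ite]
    simp only [compatible_merge_right_iff h2 hsub1 hsub2 hsub3 h23, h23, and_true]
  · rw [compCAS_eq_none h23, Option.bind_none, if_neg (fun h => h23 h.2.2)]

end CAS

theorem compCAS_assoc_general {Port D : Type} (N1 N2 N3 : Set Port)
    (c1 c2 c3 : Set Port × (Port → Option D))
    (h1 : WFCAS c1) (h2 : WFCAS c2)
    (hsub1 : c1.1 ⊆ N1) (hsub2 : c2.1 ⊆ N2) (hsub3 : c3.1 ⊆ N3) :
    (compCAS N1 N2 c1 c2).bind (fun c12 => compCAS (N1 ∪ N2) N3 c12 c3)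
      = (compCAS N2 N3 c2 c3).bind (fun c23 => compCAS N1 (N2 ∪ N3) c1 c23) := by
  rw [CAS.compCAS_bind_compCAS_left h1 hsub1 hsub2,
    CAS.compCAS_bind_compCAS_right h2 hsub1 hsub2 hsub3, CAS.merge_assoc]

/-- Associativity of the composition of constraint automaton steps: a composition
involving `⊥` is `⊥`, and the composite of `cas1 ⊙ cas2` is over `N1 ∪ N2`. -/
theorem compCAS_assoc {Port D : Type} (N1 N2 N3 : Set Port)
    (c1 c2 c3 : Set Port × (Port → Option D))
    (h1 : WFCAS c1) (h2 : WFCAS c2) (h3 : WFCAS c3)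
    (hsub1 : c1.1 ⊆ N1) (hsub2 : c2.1 ⊆ N2) (hsub3 : c3.1 ⊆ N3) :
    (compCAS N1 N2 c1 c2).bind (fun c12 => compCAS (N1 ∪ N2) N3 c12 c3)
      = (compCAS N2 N3 c2 c3).bind (fun c23 => compCAS N1 (N2 ∪ N3) c1 c23) :=
  compCAS_assoc_general N1 N2 N3 c1 c2 c3 h1 h2 hsub1 hsub2 hsub3
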